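/- Let w = 3 and let D be a minimal norm representatives digit set modulo τ³. If either |p| ≥ 5, or |p| = 4 and 5 ≤ q ≤ 9, then D is 3-subadditive. -/

import Mathlib

/-!
A nonzero digit `d` is a shortest element of `d + τ³ℤ[τ]`, so comparing it with the lattice point
nearest to `d / τ³` gives `‖d‖² ≤ q³ (4q + 4 - p²) / 16 =: B²`. If the exponents of
`τ^m c + τ^n d` are at least `3` apart there is nothing to do. Otherwise the sum is `τ^m s` with
`‖s‖ ≤ (q + 1) B`; write `s = τ^e z` with `τ ∤ z` and `z = d₀ + τ³ y` with `d₀` the digit of `z`.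
Then `‖y‖ ≤ (q + 2) B / q^(3/2)`, and the hypotheses on `p` and `q` are what makes this
smaller than `q^(3/2) / 2 = ‖τ³‖ / 2`. An element of `ℤ[τ]` prime to `τ` and shorter than
`‖τ³‖ / 2` is its own minimal norm representative, so `y = τ^k u` with `u ∈ D`, and
`τ^(m+e) d₀ + τ^(m+e+3+k) u` is the required expansion.
-/

open Complex

noncomputable section

/-- The lattice `ℤ[τ] = {a + b·τ : a, b ∈ ℤ}` as a subset of `ℂ`. -/
def Ztau (τ : ℂ) : Set ℂ := {z | ∃ a b : ℤ, z = (a : ℂ) + (b : ℂ) * τ}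

/-- `z` is divisible by `τ` in `ℤ[τ]`. -/
def TauDvd (τ : ℂ) (z : ℂ) : Prop := ∃ y ∈ Ztau τ, z = τ * y

/-- `x` is a minimal norm representative modulo `τ^w`: an element of `ℤ[τ]`,
not divisible by `τ`, of minimal norm in its residue class modulo `τ^w`. -/
def MinNormRep (τ : ℂ) (w : ℕ) (x : ℂ) : Prop :=
  x ∈ Ztau τ ∧ ¬ TauDvd τ x ∧
    ∀ y ∈ Ztau τ, ‖x‖ ≤ ‖x - τ ^ w * y‖

/-- `D` is a minimal norm representatives digit set modulo `τ^w`. -/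
def IsMinNormDigitSet (τ : ℂ) (w : ℕ) (D : Set ℂ) : Prop :=
  D ⊆ Ztau τ ∧ (0 : ℂ) ∈ D ∧ (∀ d ∈ D, d ≠ 0 → MinNormRep τ w d) ∧
    ∀ z ∈ Ztau τ, ¬ TauDvd τ z →
      ∃! d, d ∈ D ∧ ∃ y ∈ Ztau τ, z - d = τ ^ w * y

/-- An expansion: a finitely supported sequence of digits. -/
def IsExpansion (D : Set ℂ) (η : ℕ →₀ ℂ) : Prop := ∀ n, η n ∈ D

/-- The `w`-NAF condition: any two distinct nonzero digits have indices at
distance at least `w`. -/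
def IsWNAF (w : ℕ) (η : ℕ →₀ ℂ) : Prop :=
  ∀ m n : ℕ, m ≠ n → η m ≠ 0 → η n ≠ 0 → (w : ℤ) ≤ |(m : ℤ) - (n : ℤ)|

/-- The value of an expansion in base `τ`: `∑ η_n · τ^n`. -/
def evalue (τ : ℂ) (η : ℕ →₀ ℂ) : ℂ := η.sum fun n d => d * τ ^ n

/-- The weight of an expansion: the number of nonzero digits. -/
def eweight (η : ℕ →₀ ℂ) : ℕ := η.support.card

/-- A multi-expansion over the digit set `D`: a finite multiset of pairs
`(d, n)` with `d ∈ D` nonzero. -/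
def IsMultiExpansion (D : Set ℂ) (μ : Multiset (ℂ × ℕ)) : Prop :=
  ∀ x ∈ μ, x.1 ∈ D ∧ x.1 ≠ 0

/-- The value of a multi-expansion in base `τ`: `∑ d · τ^n`. -/
def mvalue (τ : ℂ) (μ : Multiset (ℂ × ℕ)) : ℂ :=
  (μ.map fun x => x.1 * τ ^ x.2).sum

/-- The digit set `D` is `w`-subadditive: the sum of the values of two
singletons has a `w`-NAF-expansion of weight at most `2`. -/
def WSubadditive (τ : ℂ) (w : ℕ) (D : Set ℂ) : Prop :=
  ∀ c ∈ D, ∀ d ∈ D, c ≠ 0 → d ≠ 0 → ∀ m n : ℕ,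
    ∃ η : ℕ →₀ ℂ, IsExpansion D η ∧ IsWNAF w η ∧
      evalue τ η = τ ^ m * c + τ ^ n * d ∧ eweight η ≤ 2

namespace Ztau

variable {p q : ℤ} {τ z y : ℂ}

lemma add_mem (hz : z ∈ Ztau τ) (hy : y ∈ Ztau τ) : z + y ∈ Ztau τ := by
  obtain ⟨a, b, rfl⟩ := hz
  obtain ⟨c, d, rfl⟩ := hy
  exact ⟨a + c, b + d, by push_cast; ring⟩

lemma neg_mem (hz : z ∈ Ztau τ) : -z ∈ Ztau τ := by
  obtain ⟨a, b, rfl⟩ := hz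
  exact ⟨-a, -b, by push_cast; ring⟩

lemma tau_mul_mem (hτ : τ ^ 2 - (p : ℂ) * τ + (q : ℂ) = 0) (hz : z ∈ Ztau τ) :
    τ * z ∈ Ztau τ := by
  obtain ⟨a, b, rfl⟩ := hz
  exact ⟨-b * q, a + b * p, by push_cast; linear_combination (b : ℂ) * hτ⟩

lemma tau_pow_mul_mem (hτ : τ ^ 2 - (p : ℂ) * τ + (q : ℂ) = 0) (hz : z ∈ Ztau τ) (k : ℕ) :
    τ ^ k * z ∈ Ztau τ := by
  induction k with
  | zero => simpa using hz
  | succ k ih => simpa [pow_succ', mul_assoc] using tau_mul_mem hτ ih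

lemma re_eq_and_im_sq_eq (hτ : τ ^ 2 - (p : ℂ) * τ + (q : ℂ) = 0) (him : τ.im ≠ 0) :
    τ.re = p / 2 ∧ τ.im ^ 2 = q - p ^ 2 / 4 := by
  have hre := congrArg Complex.re hτ
  have hImPart := congrArg Complex.im hτ
  simp only [sq, sub_re, add_re, mul_re, intCast_re, intCast_im, sub_im, add_im, mul_im,
    zero_re, zero_im] at hre hImPart
  have hτre : τ.re = p / 2 := by
    have : τ.im * (2 * τ.re - p) = 0 := by linarith
    linarith [(mul_eq_zero.mp this).resolve_left him]
  rw [hτre] at hre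
  exact ⟨hτre, by linear_combination -hre⟩

lemma norm_add_mul_sq (hτ : τ ^ 2 - (p : ℂ) * τ + (q : ℂ) = 0) (him : τ.im ≠ 0) (a b : ℤ) :
    ‖(a : ℂ) + (b : ℂ) * τ‖ ^ 2 = ((a ^ 2 + a * b * p + b ^ 2 * q : ℤ) : ℝ) := by
  obtain ⟨hre, him2⟩ := re_eq_and_im_sq_eq hτ him
  rw [Complex.sq_norm, normSq_apply]
  simp only [add_re, add_im, mul_re, mul_im, intCast_re, intCast_im, hre]
  push_cast
  linear_combination (b : ℝ) ^ 2 * him2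

lemma norm_sq (hτ : τ ^ 2 - (p : ℂ) * τ + (q : ℂ) = 0) (him : τ.im ≠ 0) : ‖τ‖ ^ 2 = q := by
  simpa using norm_add_mul_sq hτ him 0 1

lemma one_le_norm (hτ : τ ^ 2 - (p : ℂ) * τ + (q : ℂ) = 0) (him : τ.im ≠ 0)
    (hz : z ∈ Ztau τ) (hz0 : z ≠ 0) : 1 ≤ ‖z‖ := by
  obtain ⟨a, b, rfl⟩ := hz
  have hpos : (0 : ℝ) < ‖(a : ℂ) + (b : ℂ) * τ‖ ^ 2 := by positivity
  rw [norm_add_mul_sq hτ him] at hpos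
  rw [← one_le_sq_iff₀ (norm_nonneg _), norm_add_mul_sq hτ him]
  exact_mod_cast (Int.cast_pos.mp hpos : (0 : ℤ) < _)

lemma exists_eq_tau_pow_mul (hτ : τ ^ 2 - (p : ℂ) * τ + (q : ℂ) = 0) (him : τ.im ≠ 0)
    (hq : 1 < q) (hz : z ∈ Ztau τ) (hz0 : z ≠ 0) :
    ∃ (e : ℕ) (u : ℂ), u ∈ Ztau τ ∧ ¬ TauDvd τ u ∧ z = τ ^ e * u ∧ ‖u‖ ≤ ‖z‖ := by
  have hτ1 : 1 < ‖τ‖ := by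
    rw [← one_lt_sq_iff₀ (norm_nonneg _), norm_sq hτ him]
    exact_mod_cast hq
  obtain ⟨N, hN⟩ := pow_unbounded_of_one_lt ‖z‖ hτ1
  induction N generalizing z with
  | zero => exact absurd (one_le_norm hτ him hz hz0) (by simpa using hN)
  | succ N ih =>
    by_cases hdvd : TauDvd τ z
    · obtain ⟨y, hy, rfl⟩ := hdvd
      have hy0 : y ≠ 0 := by rintro rfl; simp at hz0
      have hyN : ‖y‖ < ‖τ‖ ^ N := by
        rw [norm_mul, pow_succ'] at hN
        exact lt_of_mul_lt_mul_left hN (norm_nonneg τ)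
      obtain ⟨e, u, hu, hnd, rfl, hle⟩ := ih hy hy0 hyN
      refine ⟨e + 1, u, hu, hnd, by ring, ?_⟩
      rw [norm_mul]
      nlinarith [norm_nonneg (τ ^ e * u)]
    · exact ⟨0, z, hz, hdvd, by simp, le_rfl⟩

lemma exists_norm_sub_sq_le (hτ : τ ^ 2 - (p : ℂ) * τ + (q : ℂ) = 0) (him : τ.im ≠ 0)
    (x : ℂ) : ∃ y ∈ Ztau τ, ‖x - y‖ ^ 2 ≤ (4 * q + 4 - p ^ 2 : ℝ) / 16 := by
  obtain ⟨hre, him2⟩ := re_eq_and_im_sq_eq hτ him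
  set b : ℤ := round (x.im / τ.im)
  set a : ℤ := round (x.re - b * τ.re)
  refine ⟨a + b * τ, ⟨a, b, rfl⟩, ?_⟩
  have ha : |x.re - b * τ.re - a| ≤ 1 / 2 := abs_sub_round _
  have hb : |x.im / τ.im - b| ≤ 1 / 2 := abs_sub_round _
  have him_diff : x.im - b * τ.im = (x.im / τ.im - b) * τ.im := by field_simp
  have hre_sq : (x.re - b * τ.re - a) ^ 2 ≤ 1 / 4 := by
    nlinarith [sq_abs (x.re - b * τ.re - a), abs_nonneg (x.re - b * τ.re - a)]
  have him_sq : (x.im / τ.im - b) ^ 2 ≤ 1 / 4 := by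
    nlinarith [sq_abs (x.im / τ.im - b), abs_nonneg (x.im / τ.im - b)]
  rw [Complex.sq_norm, normSq_apply]
  simp only [sub_re, add_re, mul_re, intCast_re, intCast_im, sub_im, add_im, mul_im]
  calc _ = (x.re - b * τ.re - a) ^ 2 + (x.im / τ.im - b) ^ 2 * τ.im ^ 2 := by
        rw [← mul_pow, ← him_diff]; ring
    _ ≤ 1 / 4 + 1 / 4 * τ.im ^ 2 := by gcongr
    _ = _ := by rw [him2]; ring

end Ztau

lemma MinNormRep.norm_sq_le {p q : ℤ} {τ d : ℂ} {w : ℕ}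
    (hτ : τ ^ 2 - (p : ℂ) * τ + (q : ℂ) = 0) (him : τ.im ≠ 0) (hd : MinNormRep τ w d) :
    ‖d‖ ^ 2 ≤ q ^ w * ((4 * q + 4 - p ^ 2 : ℝ) / 16) := by
  have hτ0 : τ ≠ 0 := by rintro rfl; simp at him
  obtain ⟨y, hy, hcov⟩ := Ztau.exists_norm_sub_sq_le hτ him (d / τ ^ w)
  have hmin : ‖d‖ ≤ ‖τ ^ w‖ * ‖d / τ ^ w - y‖ := by
    rw [← norm_mul, mul_sub, mul_div_cancel₀ _ (pow_ne_zero w hτ0)]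
    exact hd.2.2 y hy
  calc ‖d‖ ^ 2 ≤ (‖τ ^ w‖ * ‖d / τ ^ w - y‖) ^ 2 := by gcongr
    _ = (‖τ‖ ^ 2) ^ w * ‖d / τ ^ w - y‖ ^ 2 := by rw [norm_pow]; ring
    _ ≤ q ^ w * ((4 * q + 4 - p ^ 2 : ℝ) / 16) := by
        have hq0 : (0 : ℝ) ≤ q := by rw [← Ztau.norm_sq hτ him]; positivity
        rw [Ztau.norm_sq hτ him]; gcongr

def HasWNAFOfWeightLeTwo (τ : ℂ) (w : ℕ) (D : Set ℂ) (z : ℂ) : Prop :=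
  ∃ η : ℕ →₀ ℂ, IsExpansion D η ∧ IsWNAF w η ∧ evalue τ η = z ∧ eweight η ≤ 2

lemma hasWNAFOfWeightLeTwo_pow_mul_add_pow_mul {D : Set ℂ} {τ c d : ℂ} {w m n : ℕ}
    (h0 : (0 : ℂ) ∈ D) (hc : c ∈ D) (hd : d ∈ D) (hw : 0 < w) (hmn : m + w ≤ n) :
    HasWNAFOfWeightLeTwo τ w D (τ ^ m * c + τ ^ n * d) := by
  have hne : m ≠ n := by omega
  set η := Finsupp.single m c + Finsupp.single n d
  have hη : ∀ k, η k = (if m = k then c else 0) + (if n = k then d else 0) := by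
    simp [η, Finsupp.single_apply]
  have hsupp : ∀ k, η k ≠ 0 → k = m ∨ k = n := by
    intro k hk
    by_contra! h
    simp [hη, Ne.symm h.1, Ne.symm h.2] at hk
  refine ⟨η, fun k => ?_, fun a b hab ha hb => ?_, ?_, ?_⟩
  · rw [hη]
    split_ifs <;> simp_all
  · rcases hsupp a ha with rfl | rfl <;> rcases hsupp b hb with rfl | rfl <;> rw [le_abs] <;> omega
  · rw [evalue, Finsupp.sum_add_index' (by simp) (by intros; ring),
      Finsupp.sum_single_index (by simp), Finsupp.sum_single_index (by simp)]
    ring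
  · calc η.support.card ≤ ({m, n} : Finset ℕ).card := by
          refine Finset.card_le_card fun k hk => ?_
          rcases hsupp k (Finsupp.mem_support_iff.mp hk) with rfl | rfl <;> simp
      _ ≤ 2 := Finset.card_le_two

namespace IsMinNormDigitSet

variable {p q : ℤ} {τ u z : ℂ} {w : ℕ} {D : Set ℂ}

lemma mem_of_two_mul_norm_lt (hτ : τ ^ 2 - (p : ℂ) * τ + (q : ℂ) = 0) (him : τ.im ≠ 0)
    (hD : IsMinNormDigitSet τ w D) (hu : u ∈ Ztau τ) (hnd : ¬ TauDvd τ u)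
    (hlt : 2 * ‖u‖ < ‖τ‖ ^ w) : u ∈ D := by
  obtain ⟨d, hdD, v, hv, huv⟩ := (hD.2.2.2 u hu hnd).exists
  have hd_le : ‖d‖ ≤ ‖u‖ := by
    rcases eq_or_ne d 0 with rfl | hd0
    · simp
    · have h := (hD.2.2.1 d hdD hd0).2.2 (-v) (Ztau.neg_mem hv)
      rwa [show d - τ ^ w * -v = u by linear_combination -huv] at h
  have hv0 : v = 0 := by
    by_contra hv0
    have hv1 := Ztau.one_le_norm hτ him hv hv0
    have h : ‖τ‖ ^ w * ‖v‖ ≤ ‖u‖ + ‖d‖ := by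
      rw [← norm_pow, ← norm_mul, ← huv]
      exact norm_sub_le u d
    nlinarith [pow_nonneg (norm_nonneg τ) w]
  rw [hv0, mul_zero, sub_eq_zero] at huv
  exact huv ▸ hdD

lemma exists_eq_add_tau_pow_mul (hτ : τ ^ 2 - (p : ℂ) * τ + (q : ℂ) = 0) (him : τ.im ≠ 0)
    (hq : 1 < q) (hD : IsMinNormDigitSet τ w D) {B : ℝ} (hB : ∀ d ∈ D, ‖d‖ ≤ B)
    (hz : z ∈ Ztau τ) (hnd : ¬ TauDvd τ z) (hsmall : 2 * (‖z‖ + B) < ‖τ‖ ^ (2 * w)) :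
    ∃ d₀ ∈ D, ∃ u ∈ D, ∃ k : ℕ, z = d₀ + τ ^ (w + k) * u := by
  obtain ⟨d₀, hd₀, y, hy, hzy⟩ := (hD.2.2.2 z hz hnd).exists
  rcases eq_or_ne y 0 with rfl | hy0
  · exact ⟨d₀, hd₀, 0, hD.2.1, 0, by linear_combination hzy⟩
  obtain ⟨k, u, hu, hund, rfl, hle⟩ := Ztau.exists_eq_tau_pow_mul hτ him hq hy hy0
  have hy_le : ‖τ‖ ^ w * ‖τ ^ k * u‖ ≤ ‖z‖ + B := by
    rw [← norm_pow, ← norm_mul, ← hzy]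
    exact (norm_sub_le z d₀).trans (by linarith [hB d₀ hd₀])
  have hlt : 2 * ‖u‖ < ‖τ‖ ^ w := by
    rw [pow_mul', sq] at hsmall
    exact lt_of_mul_lt_mul_left (by nlinarith [pow_nonneg (norm_nonneg τ) w])
      (pow_nonneg (norm_nonneg τ) w)
  exact ⟨d₀, hd₀, u, hD.mem_of_two_mul_norm_lt hτ him hu hund hlt, k, by
    rw [pow_add]; linear_combination hzy⟩

lemma hasWNAFOfWeightLeTwo_tau_pow_mul (hτ : τ ^ 2 - (p : ℂ) * τ + (q : ℂ) = 0)
    (him : τ.im ≠ 0) (hq : 1 < q) (hw : 0 < w) (hD : IsMinNormDigitSet τ w D) {B : ℝ}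
    (hB : ∀ d ∈ D, ‖d‖ ≤ B) {s : ℂ} (hs : s ∈ Ztau τ)
    (hsmall : 2 * (‖s‖ + B) < ‖τ‖ ^ (2 * w)) (m : ℕ) :
    HasWNAFOfWeightLeTwo τ w D (τ ^ m * s) := by
  rcases eq_or_ne s 0 with rfl | hs0
  · simpa using hasWNAFOfWeightLeTwo_pow_mul_add_pow_mul (τ := τ) (m := m) (n := m + w)
      hD.2.1 hD.2.1 hD.2.1 hw le_rfl
  obtain ⟨e, z, hz, hnd, rfl, hle⟩ := Ztau.exists_eq_tau_pow_mul hτ him hq hs hs0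
  obtain ⟨d₀, hd₀, u, hu, k, rfl⟩ :=
    hD.exists_eq_add_tau_pow_mul hτ him hq hB hz hnd (by linarith)
  convert hasWNAFOfWeightLeTwo_pow_mul_add_pow_mul (τ := τ) (m := m + e) (n := m + e + (w + k))
    hD.2.1 hd₀ hu hw (by omega) using 1
  ring

end IsMinNormDigitSet

lemma two_mul_add_two_mul_sqrt_lt_cube {p q : ℤ} (hpq : p ^ 2 < 4 * q)
    (hp : 5 ≤ |p| ∨ (|p| = 4 ∧ 5 ≤ q ∧ q ≤ 9)) :
    2 * ((q + 2) * √(q ^ 3 * ((4 * q + 4 - p ^ 2 : ℝ) / 16))) < (q : ℝ) ^ 3 := by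
  -- for `p² = 16` this reads `q² < 8q + 12`, i.e. `q ≤ 9`
  have hint : (q + 2) ^ 2 * (4 * q + 4 - p ^ 2) < 4 * q ^ 3 := by
    rcases hp with h | ⟨h, h5, h9⟩
    · have : 25 ≤ p ^ 2 := by rw [← sq_abs]; nlinarith
      nlinarith
    · have : p ^ 2 = 16 := by rw [← sq_abs, h]; norm_num
      nlinarith
  have hq : (0 : ℝ) < q := by exact_mod_cast (by nlinarith : (0 : ℤ) < q)
  have hR : (0 : ℝ) ≤ 4 * q + 4 - p ^ 2 := by exact_mod_cast (by linarith : (0 : ℤ) ≤ _)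
  have hint' : ((q : ℝ) + 2) ^ 2 * (4 * q + 4 - p ^ 2) < 4 * q ^ 3 := by exact_mod_cast hint
  refine lt_of_pow_lt_pow_left₀ 2 (by positivity) ?_
  rw [mul_pow, mul_pow, Real.sq_sqrt (by positivity)]
  nlinarith [pow_pos hq 3]

/-- For `w = 3`: if `|p| ≥ 5`, or `|p| = 4` and `5 ≤ q ≤ 9`, then the minimal
norm representatives digit set modulo `τ³` is `3`-subadditive. -/
theorem wsubadditive_w3 (p q : ℤ) (τ : ℂ)
    (hpq : p ^ 2 < 4 * q)
    (hroot : τ ^ 2 - (p : ℂ) * τ + (q : ℂ) = 0)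
    (him : τ.im ≠ 0)
    (hp : 5 ≤ |p| ∨ (|p| = 4 ∧ 5 ≤ q ∧ q ≤ 9))
    (D : Set ℂ) (hD : IsMinNormDigitSet τ 3 D) :
    WSubadditive τ 3 D := by
  have hq : 1 < q := by rcases hp with h | ⟨h, -⟩ <;> nlinarith [sq_abs p]
  set B := √(q ^ 3 * ((4 * q + 4 - p ^ 2 : ℝ) / 16))
  have hB : ∀ d ∈ D, ‖d‖ ≤ B := fun d hd => by
    rcases eq_or_ne d 0 with rfl | hd0
    · simp [B]
    · simpa using Real.abs_le_sqrt ((hD.2.2.1 d hd hd0).norm_sq_le hroot him)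
  have hτq : ‖τ‖ ^ 2 = q := Ztau.norm_sq hroot him
  intro c hc d hd hc0 hd0 m n
  wlog hmn : m ≤ n generalizing c d m n
  · simpa only [add_comm] using this d hd c hc hd0 hc0 n m (by omega)
  obtain ⟨j, rfl⟩ := Nat.exists_eq_add_of_le hmn
  by_cases hj : 3 ≤ j
  · exact hasWNAFOfWeightLeTwo_pow_mul_add_pow_mul hD.2.1 hc hd (by norm_num) (by omega)
  rw [pow_add, mul_assoc, ← mul_add]
  refine hD.hasWNAFOfWeightLeTwo_tau_pow_mul hroot him hq (by norm_num) hB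
    (Ztau.add_mem (hD.1 hc) (Ztau.tau_pow_mul_mem hroot (hD.1 hd) j)) ?_ m
  have hτj : ‖τ ^ j * d‖ ≤ q * B := by
    rw [norm_mul, norm_pow, ← hτq]
    have hτ1 : 1 ≤ ‖τ‖ :=
      (one_le_sq_iff₀ (norm_nonneg τ)).mp (by rw [hτq]; exact_mod_cast hq.le)
    gcongr
    · omega
    · exact hB d hd
  calc 2 * (‖c + τ ^ j * d‖ + B) ≤ 2 * ((q + 2) * B) := by
        nlinarith [norm_add_le c (τ ^ j * d), hB c hc]
    _ < q ^ 3 := two_mul_add_two_mul_sqrt_lt_cube hpq hp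
    _ = ‖τ‖ ^ (2 * 3) := by rw [pow_mul, hτq]
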